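/- Let S = S_{g,n} be a connected orientable surface with genus g ≥ 1, empty boundary and n ≥ 0 punctures, and let T be a triangle in HT(S). Then there exists a unique multicurve M of cardinality g−1 such that M is contained in every element of T. -/

import Mathlib

namespace HTPaper

/-- Abstract model of a connected orientable surface `S_{g,n}` of genus `g` with `n` punctures
and empty boundary, together with the standard data on isotopy classes of essential simple
closed curves: geometric intersection numbers and the topology of complements of multicurves. -/
structure Surface where
  /-- genus -/
  g : ℕ
  /-- number of punctures -/
  n : ℕ
  /-- isotopy classes of essential simple closed curves -/
  Curve : Type
  deceq : DecidableEq Curve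
  /-- geometric intersection number -/
  inter : Curve → Curve → ℕ
  inter_symm : ∀ a b, inter a b = inter b a
  inter_self : ∀ a, inter a a = 0
  /-- number of connected components of the complement of a finite set of curves -/
  components : Finset Curve → ℕ
  /-- every connected component of the complement of the given set of curves has genus zero -/
  allComplGenusZero : Finset Curve → Prop
  /-- the boundary curve of a closed regular neighbourhood of a chain (of even length) -/
  chainBd : List Curve → Curve
  /-- the two curves are spherical-Farey neighbours of type A -/
  SFTypeA : Curve → Curve → Prop

attribute [instance] Surface.deceq

namespace Surface

variable (S : Surface)

/-- a multicurve: a nonempty set of pairwise disjoint (distinct) curves -/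
def IsMulticurve (M : Finset S.Curve) : Prop :=
  M.Nonempty ∧ (M : Set S.Curve).Pairwise fun a b => S.inter a b = 0

/-- the complement of the given set of curves is connected -/
def ComplConn (M : Finset S.Curve) : Prop := S.components M = 1

/-- a nonseparating curve -/
def Nonsep (a : S.Curve) : Prop := S.components {a} = 1

/-- a separating curve -/
def Separating (a : S.Curve) : Prop := S.components {a} ≠ 1

/-- a cut system: a multicurve of cardinality `g` with connected complement -/
def IsCutSystem (C : Finset S.Curve) : Prop :=
  S.IsMulticurve C ∧ C.card = S.g ∧ S.ComplConn C

/-- elementary move: the two cut systems share exactly `g - 1` curves and the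
remaining two curves intersect exactly once -/
def ElemMove (C₁ C₂ : Finset S.Curve) : Prop :=
  (C₁ ∩ C₂).card = S.g - 1 ∧ ∀ a ∈ C₁ \ C₂, ∀ b ∈ C₂ \ C₁, S.inter a b = 1

/-- adjacency in the Hatcher–Thurston graph `HT(S)` -/
def HTAdj (C₁ C₂ : Finset S.Curve) : Prop :=
  S.IsCutSystem C₁ ∧ S.IsCutSystem C₂ ∧ C₁ ≠ C₂ ∧ S.ElemMove C₁ C₂

/-- `A ∼_C B` : `A` and `B` are in the same colour of `lk(C)` -/
def SameColour (C A B : Finset S.Curve) : Prop := A ∩ C = B ∩ C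

/-- the two cut systems differ in exactly two curves -/
def DifferTwo (A B : Finset S.Curve) : Prop := (A \ B).card = 2 ∧ (B \ A).card = 2

/-- `C₁, C₂, C₃, C₄` are the consecutive vertices of an alternating square in `HT(S)` -/
def AltSquare (C₁ C₂ C₃ C₄ : Finset S.Curve) : Prop :=
  S.HTAdj C₁ C₂ ∧ S.HTAdj C₂ C₃ ∧ S.HTAdj C₃ C₄ ∧ S.HTAdj C₄ C₁ ∧
  C₁ ≠ C₂ ∧ C₁ ≠ C₃ ∧ C₁ ≠ C₄ ∧ C₂ ≠ C₃ ∧ C₂ ≠ C₄ ∧ C₃ ≠ C₄ ∧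
  ¬ S.SameColour C₂ C₁ C₃ ∧ ¬ S.SameColour C₃ C₂ C₄

/-- a triangle in `HT(S)`: three distinct cut systems pairwise spanning edges -/
def IsTriangle (T : Finset (Finset S.Curve)) : Prop :=
  T.card = 3 ∧ ∀ A ∈ T, ∀ B ∈ T, A ≠ B → S.HTAdj A B

/-- a pants decomposition: a maximal multicurve -/
def IsPants (P : Finset S.Curve) : Prop :=
  S.IsMulticurve P ∧ ∀ Q, S.IsMulticurve Q → P ⊆ Q → Q = P

/-- a halving multicurve: `g + 1` nonseparating curves cutting the surface into two
genus-zero connected components -/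
def IsHalving (H : Finset S.Curve) : Prop :=
  S.IsMulticurve H ∧ (∀ a ∈ H, S.Nonsep a) ∧ H.card = S.g + 1 ∧
  S.components H = 2 ∧ S.allComplGenusZero H

/-- a cutting halving multicurve: a halving multicurve any `g` elements of which
form a cut system -/
def IsCuttingHalving (H : Finset S.Curve) : Prop :=
  S.IsHalving H ∧ ∀ C ⊆ H, C.card = S.g → S.IsCutSystem C

/-- a chain: consecutive curves intersect once, non-consecutive curves are disjoint -/
def IsChain (X : List S.Curve) : Prop :=
  X.Nodup ∧ ∀ j l : Fin X.length,
    ((j : ℕ) + 1 = (l : ℕ) → S.inter (X.get j) (X.get l) = 1) ∧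
    ((j : ℕ) + 2 ≤ (l : ℕ) → S.inter (X.get j) (X.get l) = 0)

/-- a defining chain of a separating curve `β`: a chain (of even length) whose closed
regular neighbourhood has boundary curve `β` -/
def IsDefiningChain (X : List S.Curve) (β : S.Curve) : Prop :=
  S.IsChain X ∧ X.length % 2 = 0 ∧ 0 < X.length ∧
  (∀ a ∈ X, a ≠ β ∧ S.inter a β = 0) ∧ S.chainBd X = β

end Surface

/-- a map of vertices of Hatcher–Thurston graphs: cut systems go to cut systems -/
def VertexMap (S₁ S₂ : Surface) (φ : Finset S₁.Curve → Finset S₂.Curve) : Prop :=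
  ∀ C, S₁.IsCutSystem C → S₂.IsCutSystem (φ C)

/-- an edge-preserving map: distinct adjacent cut systems have distinct adjacent images -/
def EdgePreserving (S₁ S₂ : Surface) (φ : Finset S₁.Curve → Finset S₂.Curve) : Prop :=
  ∀ C₁ C₂, S₁.HTAdj C₁ C₂ → S₂.HTAdj (φ C₁) (φ C₂)

/-- an alternating map: if `C₁, C₂ ∈ lk(C)` differ in exactly two curves then so do
their images -/
def Alternating (S₁ S₂ : Surface) (φ : Finset S₁.Curve → Finset S₂.Curve) : Prop :=
  ∀ C C₁ C₂, S₁.HTAdj C C₁ → S₁.HTAdj C C₂ → S₁.DifferTwo C₁ C₂ →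
    S₂.DifferTwo (φ C₁) (φ C₂)

/-- the defining property of the map `ψ` induced on nonseparating curves: `ψ α` is the
(unique, by Theorem A) curve contained in `φ C` for every cut system `C` containing `α` -/
def InducedCurveMap (S₁ S₂ : Surface) (φ : Finset S₁.Curve → Finset S₂.Curve)
    (ψ : S₁.Curve → S₂.Curve) : Prop :=
  ∀ α, S₁.Nonsep α → ∀ C, S₁.IsCutSystem C → α ∈ C → ψ α ∈ φ C

/-- Abstract model of the map `π_C` obtained by filling the punctures of `S₂` and identifying
the result with `S₁`. -/
structure Filling (S₂ S₁ : Surface) where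
  /-- the induced map `π_C` on curves -/
  toFun : S₂.Curve → S₁.Curve
  nonsep : ∀ a, S₂.Nonsep a → S₁.Nonsep (toFun a)
  inter_le : ∀ a b, S₁.inter (toFun a) (toFun b) ≤ S₂.inter a b
  inter_one : ∀ a b, S₂.Nonsep a → S₂.Nonsep b → S₂.inter a b = 1 →
    S₁.inter (toFun a) (toFun b) = 1
  /-- the induced map `π_HT` sends cut systems to cut systems -/
  cut : ∀ C, S₂.IsCutSystem C → S₁.IsCutSystem (C.image toFun)

/-- the action on curves of a (self-)homeomorphism of `S`: a bijection of curves preserving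
intersection numbers and the topology of complements -/
structure Homeo (S : Surface) where
  toFun : S.Curve → S.Curve
  bij : Function.Bijective toFun
  inter_eq : ∀ a b, S.inter (toFun a) (toFun b) = S.inter a b
  components_eq : ∀ M : Finset S.Curve, S.components (M.image toFun) = S.components M

/-- the map `φ` on the Hatcher–Thurston graph is induced by a homeomorphism of `S` -/
def InducedByHomeo (S : Surface) (φ : Finset S.Curve → Finset S.Curve) : Prop :=
  ∃ h : Homeo S, ∀ C, S.IsCutSystem C → φ C = C.image h.toFun


theorem _root_.Finset.eq_of_sdiff_eq_of_sdiff_eq {α : Type*} [DecidableEq α] {A B C : Finset α}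
    (h₁ : A \ C = B \ C) (h₂ : C \ A = C \ B) : A = B := by
  rw [← Finset.sdiff_union_inter A C, ← Finset.sdiff_union_inter B C, h₁, Finset.inter_comm,
    ← Finset.sdiff_sdiff_self_left, h₂, Finset.sdiff_sdiff_self_left, Finset.inter_comm]

namespace Surface

variable {S : Surface} {A B C : Finset S.Curve}

theorem IsCutSystem.pairwise_inter_eq_zero (h : S.IsCutSystem C) :
    (C : Set S.Curve).Pairwise fun a b => S.inter a b = 0 :=
  h.1.2

theorem HTAdj.ne (h : S.HTAdj A B) : A ≠ B := h.2.2.1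

theorem HTAdj.card_inter (h : S.HTAdj A B) : (A ∩ B).card = S.g - 1 := h.2.2.2.1

theorem HTAdj.inter_eq_one (h : S.HTAdj A B) {a b : S.Curve} (ha : a ∈ A \ B) (hb : b ∈ B \ A) :
    S.inter a b = 1 :=
  h.2.2.2.2 a ha b hb

theorem HTAdj.symm (h : S.HTAdj A B) : S.HTAdj B A :=
  ⟨h.2.1, h.1, h.ne.symm, by rw [Finset.inter_comm]; exact h.card_inter,
    fun b hb a ha => (S.inter_symm b a).trans (h.inter_eq_one ha hb)⟩

theorem HTAdj.card_sdiff (h : S.HTAdj A B) : (A \ B).card = 1 := by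
  obtain ⟨⟨-, hA, -⟩, ⟨-, hB, -⟩, hne, hinter, -⟩ := h
  have hnonempty : (A \ B).Nonempty :=
    Finset.sdiff_nonempty.mpr fun hsub => hne (Finset.eq_of_subset_of_card_le hsub (by omega))
  have := Finset.card_sdiff_add_card_inter A B
  have := hnonempty.card_pos
  omega

theorem HTAdj.exists_sdiff_eq_singleton (h : S.HTAdj A B) : ∃ a, A \ B = {a} :=
  Finset.card_eq_one.mp h.card_sdiff

theorem HTAdj.sdiff_eq_singleton (h : S.HTAdj A B) {x : S.Curve} (hx : x ∈ A \ B) :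
    A \ B = {x} := by
  obtain ⟨a, ha⟩ := h.exists_sdiff_eq_singleton
  rw [ha, Finset.mem_singleton] at hx
  rw [ha, hx]

/-- In a triangle `A, B, C`, the curve `x` of `A ∩ B` missing from `C` would be the curve replaced
in both moves `A → C` and `B → C`, by the same curve `c` of `C` (which meets `x` once, so cannot lie
in `B` next to `x`); then `A` and `B` would both be `(C \ {c}) ∪ {x}`. -/
theorem HTAdj.inter_subset_of_htAdj (hAB : S.HTAdj A B) (hAC : S.HTAdj A C) (hBC : S.HTAdj B C) :
    A ∩ B ⊆ C := by
  intro x hx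
  by_contra hxC
  obtain ⟨hxA, hxB⟩ := Finset.mem_inter.mp hx
  have hAC_x : A \ C = {x} := hAC.sdiff_eq_singleton (Finset.mem_sdiff.mpr ⟨hxA, hxC⟩)
  have hBC_x : B \ C = {x} := hBC.sdiff_eq_singleton (Finset.mem_sdiff.mpr ⟨hxB, hxC⟩)
  obtain ⟨c, hCA_c⟩ := hAC.symm.exists_sdiff_eq_singleton
  have hc : c ∈ C \ A := by rw [hCA_c]; exact Finset.mem_singleton_self c
  have hcB : c ∉ B := by
    intro hcB
    have hxc : S.inter x c = 1 :=
      hAC.inter_eq_one (by rw [hAC_x]; exact Finset.mem_singleton_self x) hc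
    have hxc' : S.inter x c = 0 :=
      hBC.1.pairwise_inter_eq_zero hxB hcB fun hxc => (Finset.mem_sdiff.mp hc).2 (hxc ▸ hxA)
    omega
  have hCB_c : C \ B = {c} := hBC.symm.sdiff_eq_singleton
    (Finset.mem_sdiff.mpr ⟨(Finset.mem_sdiff.mp hc).1, hcB⟩)
  exact hAB.ne (Finset.eq_of_sdiff_eq_of_sdiff_eq (hAC_x.trans hBC_x.symm)
    (hCA_c.trans hCB_c.symm))

end Surface

theorem lemma_multicurve_in_triangle_general (S : Surface)
    (T : Finset (Finset S.Curve)) (hT : S.IsTriangle T) :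
    ∃! M : Finset S.Curve,
      M.card = S.g - 1 ∧
      ((M : Set S.Curve).Pairwise fun a b => S.inter a b = 0) ∧
      ∀ A ∈ T, M ⊆ A := by
  obtain ⟨hcard, hadj⟩ := hT
  obtain ⟨A, B, C, hAB, hAC, hBC, rfl⟩ := Finset.card_eq_three.mp hcard
  have hA : A ∈ ({A, B, C} : Finset (Finset S.Curve)) := by simp
  have hB : B ∈ ({A, B, C} : Finset (Finset S.Curve)) := by simp
  have hC : C ∈ ({A, B, C} : Finset (Finset S.Curve)) := by simp
  have adjAB := hadj A hA B hB hAB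
  have hsubC : A ∩ B ⊆ C :=
    adjAB.inter_subset_of_htAdj (hadj A hA C hC hAC) (hadj B hB C hC hBC)
  refine ⟨A ∩ B, ⟨adjAB.card_inter,
    adjAB.1.pairwise_inter_eq_zero.mono (Finset.coe_subset.mpr Finset.inter_subset_left), ?_⟩, ?_⟩
  · simp only [Finset.mem_insert, Finset.mem_singleton]
    rintro D (rfl | rfl | rfl)
    exacts [Finset.inter_subset_left, Finset.inter_subset_right, hsubC]
  · rintro M ⟨hMcard, -, hMsub⟩
    exact Finset.eq_of_subset_of_card_le (Finset.subset_inter (hMsub A hA) (hMsub B hB))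
      (by rw [hMcard, adjAB.card_inter])

/-- For every triangle `T` in `HT(S)` (genus `g ≥ 1`) there is a unique multicurve `M` of
cardinality `g − 1` contained in every element of `T`. -/
theorem lemma_multicurve_in_triangle (S : Surface) (hg : 1 ≤ S.g)
    (T : Finset (Finset S.Curve)) (hT : S.IsTriangle T) :
    ∃! M : Finset S.Curve,
      M.card = S.g - 1 ∧
      ((M : Set S.Curve).Pairwise fun a b => S.inter a b = 0) ∧
      ∀ A ∈ T, M ⊆ A :=
  lemma_multicurve_in_triangle_general S T hT

end HTPaper
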